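/- arXiv:math/0601764 — 11 statements merged into one kernel-verified Lean document; each statement's English description precedes it below -/
import Mathlib

section
/- If smooth functions x₁:ℝ→ℝ and z₁,z₂,z₃:ℝ→ℂ satisfy dx₁/dt = α₁|z₁|² + α₂|z₂|² + α₃|z₃|², dz₁/dt = -α₁x₁z₁ + iβ₁·conj(z₂z₃), dz₂/dt = -α₂x₁z₂ + iβ₂·conj(z₃z₁), dz₃/dt = -α₃x₁z₃ + iβ₃·conj(z₁z₂), where β₁ = α₂-α₃, β₂ = α₃-α₁, β₃ = α₁-α₂, then the function x₁² + |z₁|² + |z₂|² + |z₃|² is constant. -/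
/-!
Differentiate the energy `E = x₁² + ‖z₁‖² + ‖z₂‖² + ‖z₃‖²`. The damping terms `-αⱼ x₁ ‖zⱼ‖²`
cancel `x₁ · dx₁/dt`, and each coupling term `i βⱼ conj (zₖ zₗ)` contributes `βⱼ · Im (z₁ z₂ z₃)`,
so `dE/dt = 2 (β₁ + β₂ + β₃) Im (z₁ z₂ z₃) = 0` because the cyclic differences sum to zero.
-/

open Complex ComplexConjugate

lemma real_inner_three_wave (a β x : ℝ) (z w u : ℂ) :
    inner ℝ z (-(a : ℂ) * (x : ℂ) * z + I * (β : ℂ) * conj (w * u))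
      = -a * x * ‖z‖ ^ 2 + β * (z * w * u).im := by
  rw [Complex.inner, ← Complex.normSq_eq_norm_sq, Complex.normSq_apply]
  simp only [map_mul, Complex.add_re, Complex.add_im, Complex.mul_re, Complex.mul_im,
    Complex.neg_re, Complex.neg_im, Complex.ofReal_re, Complex.ofReal_im, Complex.I_re,
    Complex.I_im, Complex.conj_re, Complex.conj_im]
  ring

theorem stmt0_general (α₁ α₂ α₃ : ℝ)
    (x₁ : ℝ → ℝ) (z₁ z₂ z₃ : ℝ → ℂ)
    (hx : ∀ t, HasDerivAt x₁
      (α₁ * ‖z₁ t‖ ^ 2 + α₂ * ‖z₂ t‖ ^ 2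
        + α₃ * ‖z₃ t‖ ^ 2) t)
    (h1 : ∀ t, HasDerivAt z₁ (-(α₁ : ℂ) * (x₁ t : ℂ) * z₁ t
      + I * ((α₂ - α₃ : ℝ) : ℂ) * conj (z₂ t * z₃ t)) t)
    (h2 : ∀ t, HasDerivAt z₂ (-(α₂ : ℂ) * (x₁ t : ℂ) * z₂ t
      + I * ((α₃ - α₁ : ℝ) : ℂ) * conj (z₃ t * z₁ t)) t)
    (h3 : ∀ t, HasDerivAt z₃ (-(α₃ : ℂ) * (x₁ t : ℂ) * z₃ t
      + I * ((α₁ - α₂ : ℝ) : ℂ) * conj (z₁ t * z₂ t)) t) :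
    ∀ t, x₁ t ^ 2 + ‖z₁ t‖ ^ 2 + ‖z₂ t‖ ^ 2
        + ‖z₃ t‖ ^ 2
      = x₁ 0 ^ 2 + ‖z₁ 0‖ ^ 2 + ‖z₂ 0‖ ^ 2
        + ‖z₃ 0‖ ^ 2 := by
  have h_energy : ∀ t, HasDerivAt
      (fun s => x₁ s ^ 2 + ‖z₁ s‖ ^ 2 + ‖z₂ s‖ ^ 2 + ‖z₃ s‖ ^ 2) 0 t := by
    intro t
    have h_sum := ((((hx t).pow 2).add (h1 t).norm_sq).add (h2 t).norm_sq).add (h3 t).norm_sq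
    refine h_sum.congr_deriv ?_
    have h_cyc₂ : z₂ t * z₃ t * z₁ t = z₁ t * z₂ t * z₃ t := by ring
    have h_cyc₃ : z₃ t * z₁ t * z₂ t = z₁ t * z₂ t * z₃ t := by ring
    simp only [real_inner_three_wave, h_cyc₂, h_cyc₃]
    ring
  intro t
  exact is_const_of_deriv_eq_zero (fun s => (h_energy s).differentiableAt)
    (fun s => (h_energy s).deriv) t 0

theorem stmt0 (α₁ α₂ α₃ : ℝ) (hα : α₁ + α₂ + α₃ = 0)
    (x₁ : ℝ → ℝ) (z₁ z₂ z₃ : ℝ → ℂ)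
    (hx : ∀ t, HasDerivAt x₁
      (α₁ * ‖z₁ t‖ ^ 2 + α₂ * ‖z₂ t‖ ^ 2
        + α₃ * ‖z₃ t‖ ^ 2) t)
    (h1 : ∀ t, HasDerivAt z₁ (-(α₁ : ℂ) * (x₁ t : ℂ) * z₁ t
      + I * ((α₂ - α₃ : ℝ) : ℂ) * conj (z₂ t * z₃ t)) t)
    (h2 : ∀ t, HasDerivAt z₂ (-(α₂ : ℂ) * (x₁ t : ℂ) * z₂ t
      + I * ((α₃ - α₁ : ℝ) : ℂ) * conj (z₃ t * z₁ t)) t)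
    (h3 : ∀ t, HasDerivAt z₃ (-(α₃ : ℂ) * (x₁ t : ℂ) * z₃ t
      + I * ((α₁ - α₂ : ℝ) : ℂ) * conj (z₁ t * z₂ t)) t) :
    ∀ t, x₁ t ^ 2 + ‖z₁ t‖ ^ 2 + ‖z₂ t‖ ^ 2
        + ‖z₃ t‖ ^ 2
      = x₁ 0 ^ 2 + ‖z₁ 0‖ ^ 2 + ‖z₂ 0‖ ^ 2
        + ‖z₃ 0‖ ^ 2 :=
  stmt0_general α₁ α₂ α₃ x₁ z₁ z₂ z₃ hx h1 h2 h3
end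

section
/- If smooth functions x₁:ℝ→ℝ and z₁,z₂,z₃:ℝ→ℂ satisfy dz₁/dt = -α₁x₁z₁ + iβ₁·conj(z₂z₃), dz₂/dt = -α₂x₁z₂ + iβ₂·conj(z₃z₁), dz₃/dt = -α₃x₁z₃ + iβ₃·conj(z₁z₂), where β₁ = α₂-α₃, β₂ = α₃-α₁, β₃ = α₁-α₂ and α₁+α₂+α₃ = 0, then d/dt(z₁z₂z₃) = i(β₁|z₂|²|z₃|² + β₂|z₃|²|z₁|² + β₃|z₁|²|z₂|²), which is purely imaginary, and hence Re(z₁z₂z₃) is constant. -/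
/-!
By the product rule, the damping terms contribute `-(α₁ + α₂ + α₃) x₁ z₁ z₂ z₃ = 0` to the
derivative of `z₁ z₂ z₃`, while each coupling term `i βₖ conj(zⱼ zₗ)` multiplied by `zⱼ zₗ`
gives `i βₖ |zⱼ|² |zₗ|²`. The derivative is therefore purely imaginary, so the real part of
`z₁ z₂ z₃` has zero derivative and is constant.
-/

open Complex ComplexConjugate

theorem re_eq_of_hasDerivAt_I_mul_ofReal {f : ℝ → ℂ} {g : ℝ → ℝ}
    (hf : ∀ t, HasDerivAt f (I * (g t : ℂ)) t) (s t : ℝ) : (f s).re = (f t).re := by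
  have hre : ∀ t, HasDerivAt (fun s => (f s).re) 0 t := fun t =>
    (reCLM.hasFDerivAt.comp_hasDerivAt t (hf t)).congr_deriv (by simp)
  exact is_const_of_deriv_eq_zero (fun t => (hre t).differentiableAt) (fun t => (hre t).deriv) s t

theorem triad_product_rule_eq (α₁ α₂ α₃ : ℝ) (hα : α₁ + α₂ + α₃ = 0) (x z₁ z₂ z₃ : ℂ) :
    ((-(α₁ : ℂ) * x * z₁ + I * ((α₂ - α₃ : ℝ) : ℂ) * conj (z₂ * z₃)) * z₂
        + z₁ * (-(α₂ : ℂ) * x * z₂ + I * ((α₃ - α₁ : ℝ) : ℂ) * conj (z₃ * z₁))) * z₃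
      + z₁ * z₂ * (-(α₃ : ℂ) * x * z₃ + I * ((α₁ - α₂ : ℝ) : ℂ) * conj (z₁ * z₂))
    = I * (((α₂ - α₃) * ‖z₂‖ ^ 2 * ‖z₃‖ ^ 2 + (α₃ - α₁) * ‖z₃‖ ^ 2 * ‖z₁‖ ^ 2
        + (α₁ - α₂) * ‖z₁‖ ^ 2 * ‖z₂‖ ^ 2 : ℝ) : ℂ) := by
  have hα' : (α₁ : ℂ) + α₂ + α₃ = 0 := by exact_mod_cast hα
  push_cast [map_mul, ← conj_mul']
  linear_combination (-x * z₁ * z₂ * z₃) * hα'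

theorem stmt1 (α₁ α₂ α₃ : ℝ) (hα : α₁ + α₂ + α₃ = 0)
    (x₁ : ℝ → ℝ) (z₁ z₂ z₃ : ℝ → ℂ)
    (h1 : ∀ t, HasDerivAt z₁ (-(α₁ : ℂ) * (x₁ t : ℂ) * z₁ t
      + I * ((α₂ - α₃ : ℝ) : ℂ) * conj (z₂ t * z₃ t)) t)
    (h2 : ∀ t, HasDerivAt z₂ (-(α₂ : ℂ) * (x₁ t : ℂ) * z₂ t
      + I * ((α₃ - α₁ : ℝ) : ℂ) * conj (z₃ t * z₁ t)) t)
    (h3 : ∀ t, HasDerivAt z₃ (-(α₃ : ℂ) * (x₁ t : ℂ) * z₃ t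
      + I * ((α₁ - α₂ : ℝ) : ℂ) * conj (z₁ t * z₂ t)) t) :
    (∀ t, HasDerivAt (fun s => z₁ s * z₂ s * z₃ s)
      (I * (((α₂ - α₃) * ‖z₂ t‖ ^ 2 * ‖z₃ t‖ ^ 2
        + (α₃ - α₁) * ‖z₃ t‖ ^ 2 * ‖z₁ t‖ ^ 2
        + (α₁ - α₂) * ‖z₁ t‖ ^ 2 * ‖z₂ t‖ ^ 2 : ℝ) : ℂ)) t)
    ∧ (∀ t, (z₁ t * z₂ t * z₃ t).re = (z₁ 0 * z₂ 0 * z₃ 0).re) := by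
  have hderiv : ∀ t, HasDerivAt (fun s => z₁ s * z₂ s * z₃ s)
      (I * (((α₂ - α₃) * ‖z₂ t‖ ^ 2 * ‖z₃ t‖ ^ 2
        + (α₃ - α₁) * ‖z₃ t‖ ^ 2 * ‖z₁ t‖ ^ 2
        + (α₁ - α₂) * ‖z₁ t‖ ^ 2 * ‖z₂ t‖ ^ 2 : ℝ) : ℂ)) t := fun t =>
    (((h1 t).mul (h2 t)).mul (h3 t)).congr_deriv
      (triad_product_rule_eq α₁ α₂ α₃ hα (x₁ t) (z₁ t) (z₂ t) (z₃ t))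
  exact ⟨hderiv, fun t => re_eq_of_hasDerivAt_I_mul_ofReal hderiv t 0⟩
end

section
/- Let α₁, α₂, α₃ be real numbers with α₁+α₂+α₃ = 0 and α₂ = α₃ (so β₁ = 0, β₂ = α₃-α₁ = -β₃). Suppose x₁:ℝ→ℝ and z₁,z₂,z₃:ℝ→ℂ satisfy the ODE system dx₁/dt = α₁|z₁|² + α₂|z₂|² + α₃|z₃|², dzⱼ/dt = -αⱼx₁zⱼ + iβⱼ·conj(z_k z_l) (cyclic), with z₁ real-valued and x₁² + |z₁|² + |z₂|² + |z₃|² = 1. Then the function |z₁|(x₁² + |z₁|² - 1) is constant. -/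
/-!
Since `α₂ = α₃`, the coupling term of `z₁` vanishes and `y = Re z₁` obeys `y' = -α₁ x₁ y = 2α₂ x₁ y`;
eliminating `|z₂|² + |z₃|²` with the normalisation gives `x₁' = α₂ (1 - x₁² - 3y²)`. For this planar
system `y (x₁² + y² - 1)` is a first integral, and since `x₁² + y² ≤ 1` the quantity of the theorem is
minus its absolute value.
-/

open Complex ComplexConjugate

theorem HasDerivAt.complex_re {f : ℝ → ℂ} {f' : ℂ} {t : ℝ} (hf : HasDerivAt f f' t) :
    HasDerivAt (fun s => (f s).re) f'.re t :=
  reCLM.hasFDerivAt.comp_hasDerivAt t hf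

section FirstIntegral

variable {a : ℝ} {x y : ℝ → ℝ}

theorem hasDerivAt_mul_sq_add_sq_sub_one {t : ℝ}
    (hx : HasDerivAt x (a * (1 - x t ^ 2 - 3 * y t ^ 2)) t)
    (hy : HasDerivAt y (2 * a * x t * y t) t) :
    HasDerivAt (fun s => y s * (x s ^ 2 + y s ^ 2 - 1)) 0 t := by
  refine (hy.fun_mul (((hx.fun_pow 2).fun_add (hy.fun_pow 2)).sub_const 1)).congr_deriv ?_
  ring

theorem mul_sq_add_sq_sub_one_eq
    (hx : ∀ t, HasDerivAt x (a * (1 - x t ^ 2 - 3 * y t ^ 2)) t)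
    (hy : ∀ t, HasDerivAt y (2 * a * x t * y t) t) (s t : ℝ) :
    y s * (x s ^ 2 + y s ^ 2 - 1) = y t * (x t ^ 2 + y t ^ 2 - 1) :=
  have hG t := hasDerivAt_mul_sq_add_sq_sub_one (hx t) (hy t)
  is_const_of_deriv_eq_zero (fun t => (hG t).differentiableAt) (fun t => (hG t).deriv) s t

end FirstIntegral

theorem abs_mul_eq_neg_abs_mul_of_nonpos {a b : ℝ} (hb : b ≤ 0) : |a| * b = -|a * b| := by
  rw [abs_mul, abs_of_nonpos hb, mul_neg, neg_neg]

theorem stmt4_general (α₁ α₂ α₃ : ℝ) (hα : α₁ + α₂ + α₃ = 0) (hα23 : α₂ = α₃)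
    (x₁ : ℝ → ℝ) (z₁ z₂ z₃ : ℝ → ℂ)
    (hx : ∀ t, HasDerivAt x₁
      (α₁ * ‖z₁ t‖ ^ 2 + α₂ * ‖z₂ t‖ ^ 2
        + α₃ * ‖z₃ t‖ ^ 2) t)
    (h1 : ∀ t, HasDerivAt z₁ (-(α₁ : ℂ) * (x₁ t : ℂ) * z₁ t
      + I * ((α₂ - α₃ : ℝ) : ℂ) * conj (z₂ t * z₃ t)) t)
    (hreal : ∀ t, (z₁ t).im = 0)
    (hnorm : ∀ t, x₁ t ^ 2 + ‖z₁ t‖ ^ 2 + ‖z₂ t‖ ^ 2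
      + ‖z₃ t‖ ^ 2 = 1) :
    ∀ t, ‖z₁ t‖ * (x₁ t ^ 2 + ‖z₁ t‖ ^ 2 - 1)
      = ‖z₁ 0‖ * (x₁ 0 ^ 2 + ‖z₁ 0‖ ^ 2 - 1) := by
  set y : ℝ → ℝ := fun t => (z₁ t).re
  have hz₁ t : ‖z₁ t‖ = |y t| := (abs_re_eq_norm.2 (hreal t)).symm
  have hnorm' t : x₁ t ^ 2 + y t ^ 2 + ‖z₂ t‖ ^ 2 + ‖z₃ t‖ ^ 2 = 1 := by
    rw [← sq_abs (y t), ← hz₁, hnorm]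
  have hy t : HasDerivAt y (2 * α₂ * x₁ t * y t) t := by
    convert (h1 t).complex_re using 1
    have hα₁ : α₁ = -2 * α₂ := by linarith
    simp [hα₁, hα23, y]
  have hx' t : HasDerivAt x₁ (α₂ * (1 - x₁ t ^ 2 - 3 * y t ^ 2)) t := by
    convert hx t using 1
    rw [hz₁, sq_abs]
    linear_combination (-α₂) * hnorm' t - y t ^ 2 * hα + (‖z₃ t‖ ^ 2 - y t ^ 2) * hα23
  have hsign t : ‖z₁ t‖ * (x₁ t ^ 2 + ‖z₁ t‖ ^ 2 - 1) = -|y t * (x₁ t ^ 2 + y t ^ 2 - 1)| := by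
    rw [hz₁, sq_abs]
    refine abs_mul_eq_neg_abs_mul_of_nonpos ?_
    linarith [hnorm' t, sq_nonneg ‖z₂ t‖, sq_nonneg ‖z₃ t‖]
  intro t
  rw [hsign, hsign, mul_sq_add_sq_sub_one_eq hx' hy t 0]

theorem stmt4 (α₁ α₂ α₃ : ℝ) (hα : α₁ + α₂ + α₃ = 0) (hα23 : α₂ = α₃)
    (x₁ : ℝ → ℝ) (z₁ z₂ z₃ : ℝ → ℂ)
    (hx : ∀ t, HasDerivAt x₁
      (α₁ * ‖z₁ t‖ ^ 2 + α₂ * ‖z₂ t‖ ^ 2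
        + α₃ * ‖z₃ t‖ ^ 2) t)
    (h1 : ∀ t, HasDerivAt z₁ (-(α₁ : ℂ) * (x₁ t : ℂ) * z₁ t
      + I * ((α₂ - α₃ : ℝ) : ℂ) * conj (z₂ t * z₃ t)) t)
    (h2 : ∀ t, HasDerivAt z₂ (-(α₂ : ℂ) * (x₁ t : ℂ) * z₂ t
      + I * ((α₃ - α₁ : ℝ) : ℂ) * conj (z₃ t * z₁ t)) t)
    (h3 : ∀ t, HasDerivAt z₃ (-(α₃ : ℂ) * (x₁ t : ℂ) * z₃ t
      + I * ((α₁ - α₂ : ℝ) : ℂ) * conj (z₁ t * z₂ t)) t)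
    (hreal : ∀ t, (z₁ t).im = 0)
    (hnorm : ∀ t, x₁ t ^ 2 + ‖z₁ t‖ ^ 2 + ‖z₂ t‖ ^ 2
      + ‖z₃ t‖ ^ 2 = 1) :
    ∀ t, ‖z₁ t‖ * (x₁ t ^ 2 + ‖z₁ t‖ ^ 2 - 1)
      = ‖z₁ 0‖ * (x₁ 0 ^ 2 + ‖z₁ 0‖ ^ 2 - 1) :=
  stmt4_general α₁ α₂ α₃ hα hα23 x₁ z₁ z₂ z₃ hx h1 hreal hnorm
end

section
/- If z₁, z₂, z₃, z₄:ℝ→ℂ are differentiable functions satisfying dz₁/dt = z₁(|z₁|²+|z₂|²+|z₃|²-|z₄|²) + 2(conj(z₁z₄-z₂z₃)+z₂z₃)·conj(z₄), dz₂/dt = z₂(|z₄|²+|z₁|²+|z₂|²-|z₃|²) - 2(conj(z₁z₄-z₂z₃)-z₁z₄)·conj(z₃), dz₃/dt = z₃(|z₃|²+|z₄|²+|z₁|²-|z₂|²) - 2(conj(z₁z₄-z₂z₃)-z₁z₄)·conj(z₂), dz₄/dt = z₄(|z₂|²+|z₃|²+|z₄|²-|z₁|²) + 2(conj(z₁z₄-z₂z₃)+z₂z₃)·conj(z₁),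 then d/dt Im(z₁z₄-z₂z₃) = -2(|z₁|²+|z₂|²+|z₃|²+|z₄|²)·Im(z₁z₄-z₂z₃). -/
/-!
Write `w = z₁ z₄ - z₂ z₃` and `N = |z₁|² + |z₂|² + |z₃|² + |z₄|²`. Once `|zᵢ|²` is written as
`zᵢ conj zᵢ`, the product rule gives `w' = 2 N conj w` as a polynomial identity in the `zᵢ` and
`conj zᵢ` treated as independent variables. Taking imaginary parts, `(Im w)' = -2 N Im w`.
-/

open Complex ComplexConjugate

theorem HasDerivAt.complex_im {f : ℝ → ℂ} {f' : ℂ} {t : ℝ} (h : HasDerivAt f f' t) :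
    HasDerivAt (fun s => (f s).im) f'.im t :=
  imCLM.hasFDerivAt.comp_hasDerivAt t h

theorem cayley_det_deriv_eq {R : Type*} [CommRing R] (z₁ z₂ z₃ z₄ w₁ w₂ w₃ w₄ c : R) :
    (z₁ * (z₁ * w₁ + z₂ * w₂ + z₃ * w₃ - z₄ * w₄) + 2 * (c + z₂ * z₃) * w₄) * z₄
        + z₁ * (z₄ * (z₂ * w₂ + z₃ * w₃ + z₄ * w₄ - z₁ * w₁) + 2 * (c + z₂ * z₃) * w₁)
      - ((z₂ * (z₄ * w₄ + z₁ * w₁ + z₂ * w₂ - z₃ * w₃) - 2 * (c - z₁ * z₄) * w₃) * z₃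
        + z₂ * (z₃ * (z₃ * w₃ + z₄ * w₄ + z₁ * w₁ - z₂ * w₂) - 2 * (c - z₁ * z₄) * w₂))
      = 2 * (z₁ * w₁ + z₂ * w₂ + z₃ * w₃ + z₄ * w₄) * c := by
  ring

theorem stmt6
    (z₁ z₂ z₃ z₄ : ℝ → ℂ)
    (h1 : ∀ t, HasDerivAt z₁
      (z₁ t * ((‖z₁ t‖ ^ 2 + ‖z₂ t‖ ^ 2
          + ‖z₃ t‖ ^ 2 - ‖z₄ t‖ ^ 2 : ℝ) : ℂ)
        + 2 * (conj (z₁ t * z₄ t - z₂ t * z₃ t) + z₂ t * z₃ t) * conj (z₄ t)) t)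
    (h2 : ∀ t, HasDerivAt z₂
      (z₂ t * ((‖z₄ t‖ ^ 2 + ‖z₁ t‖ ^ 2
          + ‖z₂ t‖ ^ 2 - ‖z₃ t‖ ^ 2 : ℝ) : ℂ)
        - 2 * (conj (z₁ t * z₄ t - z₂ t * z₃ t) - z₁ t * z₄ t) * conj (z₃ t)) t)
    (h3 : ∀ t, HasDerivAt z₃
      (z₃ t * ((‖z₃ t‖ ^ 2 + ‖z₄ t‖ ^ 2
          + ‖z₁ t‖ ^ 2 - ‖z₂ t‖ ^ 2 : ℝ) : ℂ)
        - 2 * (conj (z₁ t * z₄ t - z₂ t * z₃ t) - z₁ t * z₄ t) * conj (z₂ t)) t)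
    (h4 : ∀ t, HasDerivAt z₄
      (z₄ t * ((‖z₂ t‖ ^ 2 + ‖z₃ t‖ ^ 2
          + ‖z₄ t‖ ^ 2 - ‖z₁ t‖ ^ 2 : ℝ) : ℂ)
        + 2 * (conj (z₁ t * z₄ t - z₂ t * z₃ t) + z₂ t * z₃ t) * conj (z₁ t)) t) :
    ∀ t, HasDerivAt (fun s => (z₁ s * z₄ s - z₂ s * z₃ s).im)
      (-2 * (‖z₁ t‖ ^ 2 + ‖z₂ t‖ ^ 2
          + ‖z₃ t‖ ^ 2 + ‖z₄ t‖ ^ 2)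
        * (z₁ t * z₄ t - z₂ t * z₃ t).im) t := by
  intro t
  have hw : HasDerivAt (fun s => z₁ s * z₄ s - z₂ s * z₃ s)
      (((2 * (‖z₁ t‖ ^ 2 + ‖z₂ t‖ ^ 2 + ‖z₃ t‖ ^ 2 + ‖z₄ t‖ ^ 2) : ℝ) : ℂ)
        * conj (z₁ t * z₄ t - z₂ t * z₃ t)) t := by
    refine (((h1 t).mul (h4 t)).sub ((h2 t).mul (h3 t))).congr_deriv ?_
    push_cast
    simp only [← mul_conj']
    exact cayley_det_deriv_eq ..
  convert hw.complex_im using 1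
  rw [im_ofReal_mul, conj_im]
  ring
end

section
/- Under the SU(2)-invariant Cayley ODE system (dz₁/dt = z₁(|z₁|²+|z₂|²+|z₃|²-|z₄|²) + 2(conj(z₁z₄-z₂z₃)+z₂z₃)·conj(z₄), etc.), the real function u = |z₁|² - |z₂|² + |z₃|² - |z₄|² satisfies du/dt = 2(|z₁|²+|z₂|²+|z₃|²+|z₄|²)u. -/
open Complex ComplexConjugate

/-!
Since `d/dt ‖z‖² = 2 Re(z' z̄)`, each equation contributes `2 ‖zᵢ‖² rᵢ` (with `rᵢ` its real
coefficient) plus a cross term. The cross terms of `z₁` and `z₄` coincide, as do those of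
`z₂` and `z₃`, so they cancel in the alternating sum `u`; what remains is
`2 ∑ ± ‖zᵢ‖² rᵢ = 2 (∑ ‖zᵢ‖²) u`.
-/

lemma HasDerivAt.norm_sq_complex {z : ℝ → ℂ} {w : ℂ} {t : ℝ} (h : HasDerivAt z w t) :
    HasDerivAt (fun s => ‖z s‖ ^ 2) (2 * (w * conj (z t)).re) t := by
  simpa only [Complex.inner] using h.norm_sq

lemma Complex.re_mul_ofReal_mul_conj (z : ℂ) (r : ℝ) : (z * r * conj z).re = ‖z‖ ^ 2 * r := by
  rw [mul_right_comm, mul_conj, ← ofReal_mul, ofReal_re, normSq_eq_norm_sq]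

theorem stmt7
    (z₁ z₂ z₃ z₄ : ℝ → ℂ)
    (h1 : ∀ t, HasDerivAt z₁
      (z₁ t * ((‖z₁ t‖ ^ 2 + ‖z₂ t‖ ^ 2
          + ‖z₃ t‖ ^ 2 - ‖z₄ t‖ ^ 2 : ℝ) : ℂ)
        + 2 * (conj (z₁ t * z₄ t - z₂ t * z₃ t) + z₂ t * z₃ t) * conj (z₄ t)) t)
    (h2 : ∀ t, HasDerivAt z₂
      (z₂ t * ((‖z₄ t‖ ^ 2 + ‖z₁ t‖ ^ 2
          + ‖z₂ t‖ ^ 2 - ‖z₃ t‖ ^ 2 : ℝ) : ℂ)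
        - 2 * (conj (z₁ t * z₄ t - z₂ t * z₃ t) - z₁ t * z₄ t) * conj (z₃ t)) t)
    (h3 : ∀ t, HasDerivAt z₃
      (z₃ t * ((‖z₃ t‖ ^ 2 + ‖z₄ t‖ ^ 2
          + ‖z₁ t‖ ^ 2 - ‖z₂ t‖ ^ 2 : ℝ) : ℂ)
        - 2 * (conj (z₁ t * z₄ t - z₂ t * z₃ t) - z₁ t * z₄ t) * conj (z₂ t)) t)
    (h4 : ∀ t, HasDerivAt z₄
      (z₄ t * ((‖z₂ t‖ ^ 2 + ‖z₃ t‖ ^ 2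
          + ‖z₄ t‖ ^ 2 - ‖z₁ t‖ ^ 2 : ℝ) : ℂ)
        + 2 * (conj (z₁ t * z₄ t - z₂ t * z₃ t) + z₂ t * z₃ t) * conj (z₁ t)) t) :
    ∀ t, HasDerivAt (fun s => ‖z₁ s‖ ^ 2 - ‖z₂ s‖ ^ 2
        + ‖z₃ s‖ ^ 2 - ‖z₄ s‖ ^ 2)
      (2 * (‖z₁ t‖ ^ 2 + ‖z₂ t‖ ^ 2
          + ‖z₃ t‖ ^ 2 + ‖z₄ t‖ ^ 2)
        * (‖z₁ t‖ ^ 2 - ‖z₂ t‖ ^ 2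
          + ‖z₃ t‖ ^ 2 - ‖z₄ t‖ ^ 2)) t := by
  intro t
  refine ((((h1 t).norm_sq_complex.sub (h2 t).norm_sq_complex).add
    (h3 t).norm_sq_complex).sub (h4 t).norm_sq_complex).congr_deriv ?_
  simp only [add_mul, sub_mul, add_re, sub_re, re_mul_ofReal_mul_conj]
  rw [mul_right_comm _ (conj (z₄ t)), mul_right_comm _ (conj (z₃ t))]
  ring
end

section
/- Under the SU(2)-invariant Cayley ODE system, the complex function u = z₁·conj(z₂) + z₃·conj(z₄) satisfies du/dt = 2(|z₁|²+|z₂|²+|z₃|²+|z₄|²)u. -/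
/-!
Differentiating `u = z₁ z̄₂ + z₃ z̄₄` and substituting the system, the terms containing
`conj (z₁ z₄ - z₂ z₃)` cancel in pairs. The norm terms contribute `2 (|z₁|² + |z₂|²) z₁ z̄₂`
and `2 (|z₃|² + |z₄|²) z₃ z̄₄`, and the remaining cubic terms are exactly the missing
`2 (|z₃|² + |z₄|²) z₁ z̄₂ + 2 (|z₁|² + |z₂|²) z₃ z̄₄`.
-/

open Complex ComplexConjugate

theorem HasDerivAt.mul_conj {f g : ℝ → ℂ} {f' g' : ℂ} {t : ℝ}
    (hf : HasDerivAt f f' t) (hg : HasDerivAt g g' t) :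
    HasDerivAt (fun s => f s * conj (g s)) (f' * conj (g t) + f t * conj g') t :=
  hf.mul hg.star

theorem cayley_mul_conj_add_mul_conj_identity (a b c d : ℂ) :
    (a * ((‖a‖ ^ 2 + ‖b‖ ^ 2 + ‖c‖ ^ 2 - ‖d‖ ^ 2 : ℝ) : ℂ)
        + 2 * (conj (a * d - b * c) + b * c) * conj d) * conj b
      + a * conj (b * ((‖d‖ ^ 2 + ‖a‖ ^ 2 + ‖b‖ ^ 2 - ‖c‖ ^ 2 : ℝ) : ℂ)
        - 2 * (conj (a * d - b * c) - a * d) * conj c)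
      + ((c * ((‖c‖ ^ 2 + ‖d‖ ^ 2 + ‖a‖ ^ 2 - ‖b‖ ^ 2 : ℝ) : ℂ)
        - 2 * (conj (a * d - b * c) - a * d) * conj b) * conj d
      + c * conj (d * ((‖b‖ ^ 2 + ‖c‖ ^ 2 + ‖d‖ ^ 2 - ‖a‖ ^ 2 : ℝ) : ℂ)
        + 2 * (conj (a * d - b * c) + b * c) * conj a))
    = ((2 * (‖a‖ ^ 2 + ‖b‖ ^ 2 + ‖c‖ ^ 2 + ‖d‖ ^ 2) : ℝ) : ℂ)
        * (a * conj b + c * conj d) := by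
  simp only [map_add, map_sub, map_mul, conj_conj, conj_ofReal, map_ofNat]
  push_cast
  simp only [← mul_conj']
  ring

theorem stmt8
    (z₁ z₂ z₃ z₄ : ℝ → ℂ)
    (h1 : ∀ t, HasDerivAt z₁
      (z₁ t * ((‖z₁ t‖ ^ 2 + ‖z₂ t‖ ^ 2
          + ‖z₃ t‖ ^ 2 - ‖z₄ t‖ ^ 2 : ℝ) : ℂ)
        + 2 * (conj (z₁ t * z₄ t - z₂ t * z₃ t) + z₂ t * z₃ t) * conj (z₄ t)) t)
    (h2 : ∀ t, HasDerivAt z₂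
      (z₂ t * ((‖z₄ t‖ ^ 2 + ‖z₁ t‖ ^ 2
          + ‖z₂ t‖ ^ 2 - ‖z₃ t‖ ^ 2 : ℝ) : ℂ)
        - 2 * (conj (z₁ t * z₄ t - z₂ t * z₃ t) - z₁ t * z₄ t) * conj (z₃ t)) t)
    (h3 : ∀ t, HasDerivAt z₃
      (z₃ t * ((‖z₃ t‖ ^ 2 + ‖z₄ t‖ ^ 2
          + ‖z₁ t‖ ^ 2 - ‖z₂ t‖ ^ 2 : ℝ) : ℂ)
        - 2 * (conj (z₁ t * z₄ t - z₂ t * z₃ t) - z₁ t * z₄ t) * conj (z₂ t)) t)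
    (h4 : ∀ t, HasDerivAt z₄
      (z₄ t * ((‖z₂ t‖ ^ 2 + ‖z₃ t‖ ^ 2
          + ‖z₄ t‖ ^ 2 - ‖z₁ t‖ ^ 2 : ℝ) : ℂ)
        + 2 * (conj (z₁ t * z₄ t - z₂ t * z₃ t) + z₂ t * z₃ t) * conj (z₁ t)) t) :
    ∀ t, HasDerivAt (fun s => z₁ s * conj (z₂ s) + z₃ s * conj (z₄ s))
      (((2 * (‖z₁ t‖ ^ 2 + ‖z₂ t‖ ^ 2
          + ‖z₃ t‖ ^ 2 + ‖z₄ t‖ ^ 2) : ℝ) : ℂ)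
        * (z₁ t * conj (z₂ t) + z₃ t * conj (z₄ t))) t := by
  intro t
  rw [← cayley_mul_conj_add_mul_conj_identity]
  exact ((h1 t).mul_conj (h2 t)).add ((h3 t).mul_conj (h4 t))
end

section
/- Under the SU(2)-invariant Cayley ODE system, the real function u = Re(z₁z₄ - z₂z₃) satisfies du/dt = 2(|z₁|²+|z₂|²+|z₃|²+|z₄|²)u, and the complex function v = z₁·conj(z₃) + z₂·conj(z₄) satisfies dv/dt = 2(|z₁|²+|z₂|²+|z₃|²+|z₄|²)v. -/
/-!
Writing `|z|² = z · conj z` turns each claim into a polynomial identity in the `zᵢ` and their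
conjugates. For `D = z₁z₄ - z₂z₃` the product rule and the system give `D' = 2|z|² · conj D`;
since `Re (conj D) = Re D`, the real part grows at rate `2|z|²`. For `v = z₁ conj z₃ + z₂ conj z₄`
the same computation gives `v' = 2|z|² v` directly.
-/

open Complex ComplexConjugate

namespace CayleySystem

noncomputable def rhs₁ (a b c d : ℂ) : ℂ :=
  a * ((‖a‖ ^ 2 + ‖b‖ ^ 2 + ‖c‖ ^ 2 - ‖d‖ ^ 2 : ℝ) : ℂ)
    + 2 * (conj (a * d - b * c) + b * c) * conj d

noncomputable def rhs₂ (a b c d : ℂ) : ℂ :=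
  b * ((‖d‖ ^ 2 + ‖a‖ ^ 2 + ‖b‖ ^ 2 - ‖c‖ ^ 2 : ℝ) : ℂ)
    - 2 * (conj (a * d - b * c) - a * d) * conj c

noncomputable def rhs₃ (a b c d : ℂ) : ℂ :=
  c * ((‖c‖ ^ 2 + ‖d‖ ^ 2 + ‖a‖ ^ 2 - ‖b‖ ^ 2 : ℝ) : ℂ)
    - 2 * (conj (a * d - b * c) - a * d) * conj b

noncomputable def rhs₄ (a b c d : ℂ) : ℂ :=
  d * ((‖b‖ ^ 2 + ‖c‖ ^ 2 + ‖d‖ ^ 2 - ‖a‖ ^ 2 : ℝ) : ℂ)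
    + 2 * (conj (a * d - b * c) + b * c) * conj a

variable {z₁ z₂ z₃ z₄ : ℝ → ℂ} {t : ℝ}

theorem hasDerivAt_det
    (h1 : HasDerivAt z₁ (rhs₁ (z₁ t) (z₂ t) (z₃ t) (z₄ t)) t)
    (h2 : HasDerivAt z₂ (rhs₂ (z₁ t) (z₂ t) (z₃ t) (z₄ t)) t)
    (h3 : HasDerivAt z₃ (rhs₃ (z₁ t) (z₂ t) (z₃ t) (z₄ t)) t)
    (h4 : HasDerivAt z₄ (rhs₄ (z₁ t) (z₂ t) (z₃ t) (z₄ t)) t) :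
    HasDerivAt (fun s => z₁ s * z₄ s - z₂ s * z₃ s)
      (((2 * (‖z₁ t‖ ^ 2 + ‖z₂ t‖ ^ 2 + ‖z₃ t‖ ^ 2 + ‖z₄ t‖ ^ 2) : ℝ) : ℂ)
        * conj (z₁ t * z₄ t - z₂ t * z₃ t)) t := by
  refine ((h1.mul h4).sub (h2.mul h3)).congr_deriv ?_
  simp only [rhs₁, rhs₂, rhs₃, rhs₄]
  push_cast
  simp only [← mul_conj', map_sub, map_mul]
  ring

theorem hasDerivAt_re_det
    (h1 : HasDerivAt z₁ (rhs₁ (z₁ t) (z₂ t) (z₃ t) (z₄ t)) t)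
    (h2 : HasDerivAt z₂ (rhs₂ (z₁ t) (z₂ t) (z₃ t) (z₄ t)) t)
    (h3 : HasDerivAt z₃ (rhs₃ (z₁ t) (z₂ t) (z₃ t) (z₄ t)) t)
    (h4 : HasDerivAt z₄ (rhs₄ (z₁ t) (z₂ t) (z₃ t) (z₄ t)) t) :
    HasDerivAt (fun s => (z₁ s * z₄ s - z₂ s * z₃ s).re)
      (2 * (‖z₁ t‖ ^ 2 + ‖z₂ t‖ ^ 2 + ‖z₃ t‖ ^ 2 + ‖z₄ t‖ ^ 2)
        * (z₁ t * z₄ t - z₂ t * z₃ t).re) t := by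
  refine (reCLM.hasFDerivAt.comp_hasDerivAt t (hasDerivAt_det h1 h2 h3 h4)).congr_deriv ?_
  simp only [reCLM_apply, re_ofReal_mul, conj_re]

theorem hasDerivAt_mul_conj_add_mul_conj
    (h1 : HasDerivAt z₁ (rhs₁ (z₁ t) (z₂ t) (z₃ t) (z₄ t)) t)
    (h2 : HasDerivAt z₂ (rhs₂ (z₁ t) (z₂ t) (z₃ t) (z₄ t)) t)
    (h3 : HasDerivAt z₃ (rhs₃ (z₁ t) (z₂ t) (z₃ t) (z₄ t)) t)
    (h4 : HasDerivAt z₄ (rhs₄ (z₁ t) (z₂ t) (z₃ t) (z₄ t)) t) :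
    HasDerivAt (fun s => z₁ s * conj (z₃ s) + z₂ s * conj (z₄ s))
      (((2 * (‖z₁ t‖ ^ 2 + ‖z₂ t‖ ^ 2 + ‖z₃ t‖ ^ 2 + ‖z₄ t‖ ^ 2) : ℝ) : ℂ)
        * (z₁ t * conj (z₃ t) + z₂ t * conj (z₄ t))) t := by
  refine ((h1.mul h3.star).add (h2.mul h4.star)).congr_deriv ?_
  simp only [rhs₁, rhs₂, rhs₃, rhs₄, star_def, map_sub, map_add, map_mul, conj_conj,
    conj_ofReal, map_ofNat]
  push_cast
  simp only [← mul_conj']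
  ring

end CayleySystem

open CayleySystem in
theorem stmt9
    (z₁ z₂ z₃ z₄ : ℝ → ℂ)
    (h1 : ∀ t, HasDerivAt z₁
      (z₁ t * ((‖z₁ t‖ ^ 2 + ‖z₂ t‖ ^ 2
          + ‖z₃ t‖ ^ 2 - ‖z₄ t‖ ^ 2 : ℝ) : ℂ)
        + 2 * (conj (z₁ t * z₄ t - z₂ t * z₃ t) + z₂ t * z₃ t) * conj (z₄ t)) t)
    (h2 : ∀ t, HasDerivAt z₂
      (z₂ t * ((‖z₄ t‖ ^ 2 + ‖z₁ t‖ ^ 2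
          + ‖z₂ t‖ ^ 2 - ‖z₃ t‖ ^ 2 : ℝ) : ℂ)
        - 2 * (conj (z₁ t * z₄ t - z₂ t * z₃ t) - z₁ t * z₄ t) * conj (z₃ t)) t)
    (h3 : ∀ t, HasDerivAt z₃
      (z₃ t * ((‖z₃ t‖ ^ 2 + ‖z₄ t‖ ^ 2
          + ‖z₁ t‖ ^ 2 - ‖z₂ t‖ ^ 2 : ℝ) : ℂ)
        - 2 * (conj (z₁ t * z₄ t - z₂ t * z₃ t) - z₁ t * z₄ t) * conj (z₂ t)) t)
    (h4 : ∀ t, HasDerivAt z₄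
      (z₄ t * ((‖z₂ t‖ ^ 2 + ‖z₃ t‖ ^ 2
          + ‖z₄ t‖ ^ 2 - ‖z₁ t‖ ^ 2 : ℝ) : ℂ)
        + 2 * (conj (z₁ t * z₄ t - z₂ t * z₃ t) + z₂ t * z₃ t) * conj (z₁ t)) t) :
    (∀ t, HasDerivAt (fun s => (z₁ s * z₄ s - z₂ s * z₃ s).re)
      (2 * (‖z₁ t‖ ^ 2 + ‖z₂ t‖ ^ 2
          + ‖z₃ t‖ ^ 2 + ‖z₄ t‖ ^ 2)
        * (z₁ t * z₄ t - z₂ t * z₃ t).re) t)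
    ∧ (∀ t, HasDerivAt (fun s => z₁ s * conj (z₃ s) + z₂ s * conj (z₄ s))
      (((2 * (‖z₁ t‖ ^ 2 + ‖z₂ t‖ ^ 2
          + ‖z₃ t‖ ^ 2 + ‖z₄ t‖ ^ 2) : ℝ) : ℂ)
        * (z₁ t * conj (z₃ t) + z₂ t * conj (z₄ t))) t) :=
  ⟨fun t => hasDerivAt_re_det (h1 t) (h2 t) (h3 t) (h4 t),
    fun t => hasDerivAt_mul_conj_add_mul_conj (h1 t) (h2 t) (h3 t) (h4 t)⟩
end

section
/- If x₁:ℝ→ℝ and z₁,z₂,z₃:ℝ→ℂ are differentiable and satisfy dx₁/dt = 0, dz₁/dt = -νz₁ - λ·conj(z₂z₃), dz₂/dt = μz₂ - λ·conj(z₃z₁), dz₃/dt = (ν-μ)z₃ - λ·conj(z₁z₂) for real constants λ, μ, ν, then d/dt(z₁z₂z₃) = -λ(|z₂|²|z₃|² + |z₃|²|z₁|² + |z₁|²|z₂|²) is real, and hence Im(z₁z₂z₃) is constant. -/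
/-! The linear terms of the three equations contribute `(-ν + μ + (ν - μ)) z₁z₂z₃ = 0` to the
derivative of `z₁z₂z₃`, and each quadratic term `-λ conj(zⱼzₖ)` multiplied by `zⱼzₖ` gives
`-λ |zⱼ|²|zₖ|²`. So the derivative of `z₁z₂z₃` is real, and its imaginary part is constant. -/

open Complex ComplexConjugate

theorem Complex.im_eq_of_hasDerivAt_of_im_eq_zero {f f' : ℝ → ℂ}
    (hf : ∀ t, HasDerivAt f (f' t) t) (hf' : ∀ t, (f' t).im = 0) (x y : ℝ) :
    (f x).im = (f y).im := by
  have him : ∀ t, HasDerivAt (fun s => (f s).im) 0 t := fun t =>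
    (imCLM.hasFDerivAt.comp_hasDerivAt t (hf t)).congr_deriv (by simpa using hf' t)
  exact is_const_of_deriv_eq_zero (fun t => (him t).differentiableAt) (fun t => (him t).deriv)
    x y

theorem triple_product_deriv_eq (lam μ ν : ℝ) (a b c : ℂ) :
    ((-(ν : ℂ) * a - lam * conj (b * c)) * b + a * ((μ : ℂ) * b - lam * conj (c * a))) * c
      + a * b * (((ν - μ : ℝ) : ℂ) * c - lam * conj (a * b))
      = -((lam * (‖b‖ ^ 2 * ‖c‖ ^ 2 + ‖c‖ ^ 2 * ‖a‖ ^ 2 + ‖a‖ ^ 2 * ‖b‖ ^ 2) : ℝ) : ℂ) := by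
  push_cast
  simp only [← mul_conj', map_mul]
  ring

theorem stmt14_general (lam μ ν : ℝ)
    (z₁ z₂ z₃ : ℝ → ℂ)
    (h1 : ∀ t, HasDerivAt z₁ (-(ν : ℂ) * z₁ t - (lam : ℂ) * conj (z₂ t * z₃ t)) t)
    (h2 : ∀ t, HasDerivAt z₂ ((μ : ℂ) * z₂ t - (lam : ℂ) * conj (z₃ t * z₁ t)) t)
    (h3 : ∀ t, HasDerivAt z₃ (((ν - μ : ℝ) : ℂ) * z₃ t - (lam : ℂ) * conj (z₁ t * z₂ t)) t) :
    (∀ t, HasDerivAt (fun s => z₁ s * z₂ s * z₃ s)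
      ((-(lam * (‖z₂ t‖ ^ 2 * ‖z₃ t‖ ^ 2
        + ‖z₃ t‖ ^ 2 * ‖z₁ t‖ ^ 2
        + ‖z₁ t‖ ^ 2 * ‖z₂ t‖ ^ 2) : ℝ) : ℂ)) t)
    ∧ (∀ t, (z₁ t * z₂ t * z₃ t).im = (z₁ 0 * z₂ 0 * z₃ 0).im) := by
  have hderiv : ∀ t, HasDerivAt (fun s => z₁ s * z₂ s * z₃ s)
      ((-(lam * (‖z₂ t‖ ^ 2 * ‖z₃ t‖ ^ 2
        + ‖z₃ t‖ ^ 2 * ‖z₁ t‖ ^ 2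
        + ‖z₁ t‖ ^ 2 * ‖z₂ t‖ ^ 2) : ℝ) : ℂ)) t := fun t =>
    (((h1 t).mul (h2 t)).mul (h3 t)).congr_deriv
      (triple_product_deriv_eq lam μ ν (z₁ t) (z₂ t) (z₃ t))
  refine ⟨hderiv, fun t => im_eq_of_hasDerivAt_of_im_eq_zero hderiv (fun _ => ?_) t 0⟩
  rw [neg_im, ofReal_im, neg_zero]

theorem stmt14 (lam μ ν : ℝ)
    (x₁ : ℝ → ℝ) (z₁ z₂ z₃ : ℝ → ℂ)
    (hx : ∀ t, HasDerivAt x₁ 0 t)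
    (h1 : ∀ t, HasDerivAt z₁ (-(ν : ℂ) * z₁ t - (lam : ℂ) * conj (z₂ t * z₃ t)) t)
    (h2 : ∀ t, HasDerivAt z₂ ((μ : ℂ) * z₂ t - (lam : ℂ) * conj (z₃ t * z₁ t)) t)
    (h3 : ∀ t, HasDerivAt z₃ (((ν - μ : ℝ) : ℂ) * z₃ t - (lam : ℂ) * conj (z₁ t * z₂ t)) t) :
    (∀ t, HasDerivAt (fun s => z₁ s * z₂ s * z₃ s)
      ((-(lam * (‖z₂ t‖ ^ 2 * ‖z₃ t‖ ^ 2
        + ‖z₃ t‖ ^ 2 * ‖z₁ t‖ ^ 2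
        + ‖z₁ t‖ ^ 2 * ‖z₂ t‖ ^ 2) : ℝ) : ℂ)) t)
    ∧ (∀ t, (z₁ t * z₂ t * z₃ t).im = (z₁ 0 * z₂ 0 * z₃ 0).im) :=
  stmt14_general lam μ ν z₁ z₂ z₃ h1 h2 h3
end

section
/- If x₁:ℝ→ℝ and z₁,z₂,z₃:ℝ→ℂ satisfy dx₁/dt = -3Im(z₁z₂z₃), dz₁/dt = z₁(|z₂|²-|z₃|²) + ix₁·conj(z₂z₃), dz₂/dt = z₂(|z₃|²-|z₁|²) + ix₁·conj(z₃z₁), dz₃/dt = z₃(|z₁|²-|z₂|²) + ix₁·conj(z₁z₂), then x₁² + |z₁|² + |z₂|² + |z₃|² is constant. -/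
/-!
Along the flow `d‖zᵢ‖²/dt = 2⟪zᵢ, żᵢ⟫`: the terms `‖zᵢ‖²(‖zⱼ‖² - ‖zₖ‖²)` cancel cyclically, and
each cubic term contributes `2 x₁ Im(z₁z₂z₃)`, which together cancel `d(x₁²)/dt = -6 x₁ Im(z₁z₂z₃)`.
-/

open Complex ComplexConjugate

open scoped InnerProductSpace in
lemma Complex.inner_mul_ofReal_add_I_mul_conj (z w v : ℂ) (a x : ℝ) :
    ⟪z, z * (a : ℂ) + I * (x : ℂ) * conj (w * v)⟫_ℝ = ‖z‖ ^ 2 * a + x * (z * w * v).im := by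
  simp only [Complex.inner, Complex.sq_norm, Complex.normSq_apply, add_mul, Complex.add_re,
    Complex.mul_re, Complex.mul_im, Complex.ofReal_re, Complex.ofReal_im, Complex.I_re,
    Complex.I_im, Complex.conj_re, Complex.conj_im, map_mul]
  ring

theorem stmt16
    (x₁ : ℝ → ℝ) (z₁ z₂ z₃ : ℝ → ℂ)
    (hx : ∀ t, HasDerivAt x₁ (-3 * (z₁ t * z₂ t * z₃ t).im) t)
    (h1 : ∀ t, HasDerivAt z₁
      (z₁ t * ((‖z₂ t‖ ^ 2 - ‖z₃ t‖ ^ 2 : ℝ) : ℂ)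
        + I * (x₁ t : ℂ) * conj (z₂ t * z₃ t)) t)
    (h2 : ∀ t, HasDerivAt z₂
      (z₂ t * ((‖z₃ t‖ ^ 2 - ‖z₁ t‖ ^ 2 : ℝ) : ℂ)
        + I * (x₁ t : ℂ) * conj (z₃ t * z₁ t)) t)
    (h3 : ∀ t, HasDerivAt z₃
      (z₃ t * ((‖z₁ t‖ ^ 2 - ‖z₂ t‖ ^ 2 : ℝ) : ℂ)
        + I * (x₁ t : ℂ) * conj (z₁ t * z₂ t)) t) :
    ∀ t, x₁ t ^ 2 + ‖z₁ t‖ ^ 2 + ‖z₂ t‖ ^ 2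
        + ‖z₃ t‖ ^ 2
      = x₁ 0 ^ 2 + ‖z₁ 0‖ ^ 2 + ‖z₂ 0‖ ^ 2
        + ‖z₃ 0‖ ^ 2 := by
  have henergy : ∀ t, HasDerivAt
      (fun t => x₁ t ^ 2 + ‖z₁ t‖ ^ 2 + ‖z₂ t‖ ^ 2 + ‖z₃ t‖ ^ 2) 0 t := by
    intro t
    refine ((((hx t).pow 2).add (h1 t).norm_sq).add (h2 t).norm_sq |>.add
      (h3 t).norm_sq).congr_deriv ?_
    rw [Complex.inner_mul_ofReal_add_I_mul_conj, Complex.inner_mul_ofReal_add_I_mul_conj,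
      Complex.inner_mul_ofReal_add_I_mul_conj, mul_rotate (z₂ t), mul_rotate (z₃ t)]
    ring
  intro t
  exact is_const_of_deriv_eq_zero (fun s => (henergy s).differentiableAt)
    (fun s => (henergy s).deriv) t 0
end

section
/- Let a₁, a₂, a₃, a₄ be integers with a₁+a₂+a₃+a₄ = 0. If z₁,z₂,z₃,z₄:ℝ→ℂ satisfy dz₁/dt = a₁·conj(z₂z₃z₄) + (1/2)z₁((a₄-a₃)|z₂|² + (a₂-a₄)|z₃|² + (a₃-a₂)|z₄|²) and the three cyclic analogues (dz₂/dt = a₂·conj(z₃z₄z₁) + (1/2)z₂((a₄-a₁)|z₃|² + (a₁-a₃)|z₄|² + (a₃-a₄)|z₁|²), dz₃/dt = a₃·conj(z₄z₁z₂) + (1/2)z₃((a₂-a₁)|z₄|² + (a₄-a₂)|z₁|² + (a₁-a₄)|z₂|²), dz₄/dt = a₄·conj(z₁z₂z₃) + (1/2)z₄((a₂-a₃)|z₁|² + (a₃-a₁)|z₂|² + (a₁-a₂)|z₃|²)), then |z₁|² + |z₂|² + |z₃|² + |z₄|² is constant. -/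
open Complex ComplexConjugate

/-! Since `d/dt ‖zᵢ‖² = 2⟪zᵢ, żᵢ⟫`, the cubic term of `żᵢ` contributes `2aᵢ Re(z₁z₂z₃z₄)`,
and these cancel because `∑ aᵢ = 0`; the quadratic terms contribute `∑ cᵢⱼ ‖zᵢ‖²‖zⱼ‖²` with
`cᵢⱼ = -cⱼᵢ`, which vanishes identically. -/

lemma Complex.inner_intCast_mul_conj_add_half_mul_ofReal (w p : ℂ) (a : ℤ) (r : ℝ) :
    inner ℝ w ((a : ℂ) * conj p + 1 / 2 * w * (r : ℂ)) = a * (w * p).re + r * ‖w‖ ^ 2 / 2 := by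
  rw [Complex.inner, Complex.sq_norm, Complex.normSq_apply]
  simp only [add_mul, add_re, mul_re, mul_im, conj_re, conj_im, intCast_re, intCast_im,
    ofReal_re, ofReal_im, div_ofNat_re, div_ofNat_im, one_re, one_im]
  ring

theorem stmt18
    (a₁ a₂ a₃ a₄ : ℤ) (ha : a₁ + a₂ + a₃ + a₄ = 0)
    (z₁ z₂ z₃ z₄ : ℝ → ℂ)
    (h1 : ∀ t, HasDerivAt z₁
      ((a₁ : ℂ) * conj (z₂ t * z₃ t * z₄ t)
        + (1 / 2 : ℂ) * z₁ t * ((((a₄ - a₃ : ℤ) : ℝ) * ‖z₂ t‖ ^ 2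
          + ((a₂ - a₄ : ℤ) : ℝ) * ‖z₃ t‖ ^ 2
          + ((a₃ - a₂ : ℤ) : ℝ) * ‖z₄ t‖ ^ 2 : ℝ) : ℂ)) t)
    (h2 : ∀ t, HasDerivAt z₂
      ((a₂ : ℂ) * conj (z₃ t * z₄ t * z₁ t)
        + (1 / 2 : ℂ) * z₂ t * ((((a₄ - a₁ : ℤ) : ℝ) * ‖z₃ t‖ ^ 2
          + ((a₁ - a₃ : ℤ) : ℝ) * ‖z₄ t‖ ^ 2
          + ((a₃ - a₄ : ℤ) : ℝ) * ‖z₁ t‖ ^ 2 : ℝ) : ℂ)) t)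
    (h3 : ∀ t, HasDerivAt z₃
      ((a₃ : ℂ) * conj (z₄ t * z₁ t * z₂ t)
        + (1 / 2 : ℂ) * z₃ t * ((((a₂ - a₁ : ℤ) : ℝ) * ‖z₄ t‖ ^ 2
          + ((a₄ - a₂ : ℤ) : ℝ) * ‖z₁ t‖ ^ 2
          + ((a₁ - a₄ : ℤ) : ℝ) * ‖z₂ t‖ ^ 2 : ℝ) : ℂ)) t)
    (h4 : ∀ t, HasDerivAt z₄
      ((a₄ : ℂ) * conj (z₁ t * z₂ t * z₃ t)
        + (1 / 2 : ℂ) * z₄ t * ((((a₂ - a₃ : ℤ) : ℝ) * ‖z₁ t‖ ^ 2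
          + ((a₃ - a₁ : ℤ) : ℝ) * ‖z₂ t‖ ^ 2
          + ((a₁ - a₂ : ℤ) : ℝ) * ‖z₃ t‖ ^ 2 : ℝ) : ℂ)) t) :
    ∀ t, ‖z₁ t‖ ^ 2 + ‖z₂ t‖ ^ 2
        + ‖z₃ t‖ ^ 2 + ‖z₄ t‖ ^ 2
      = ‖z₁ 0‖ ^ 2 + ‖z₂ 0‖ ^ 2
        + ‖z₃ 0‖ ^ 2 + ‖z₄ 0‖ ^ 2 := by
  have ha' : (a₁ : ℝ) + a₂ + a₃ + a₄ = 0 := by exact_mod_cast ha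
  have hE : ∀ s, HasDerivAt (fun t ↦ ‖z₁ t‖ ^ 2 + ‖z₂ t‖ ^ 2 + ‖z₃ t‖ ^ 2 + ‖z₄ t‖ ^ 2) 0 s := by
    intro s
    refine ((((h1 s).norm_sq.add (h2 s).norm_sq).add (h3 s).norm_sq).add
      (h4 s).norm_sq).congr_deriv ?_
    simp only [Complex.inner_intCast_mul_conj_add_half_mul_ofReal]
    have hZ₂ : z₂ s * (z₃ s * z₄ s * z₁ s) = z₁ s * (z₂ s * z₃ s * z₄ s) := by ring
    have hZ₃ : z₃ s * (z₄ s * z₁ s * z₂ s) = z₁ s * (z₂ s * z₃ s * z₄ s) := by ring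
    have hZ₄ : z₄ s * (z₁ s * z₂ s * z₃ s) = z₁ s * (z₂ s * z₃ s * z₄ s) := by ring
    rw [hZ₂, hZ₃, hZ₄]
    push_cast
    linear_combination (2 * (z₁ s * (z₂ s * z₃ s * z₄ s)).re) * ha'
  intro t
  exact is_const_of_deriv_eq_zero (fun s ↦ (hE s).differentiableAt) (fun s ↦ (hE s).deriv) t 0
end

section
/- Under the U(1)²-invariant Cayley cone ODE system with integers a₁+a₂+a₃+a₄ = 0, d/dt(z₁z₂z₃z₄) = a₁|z₂z₃z₄|² + a₂|z₃z₄z₁|² + a₃|z₄z₁z₂|² + a₄|z₁z₂z₃|², which is real; hence Im(z₁z₂z₃z₄) is constant in t. -/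
open Complex ComplexConjugate

/-!
By the product rule, `(z₁z₂z₃z₄)'` is a sum of four terms. The term `aᵢ conj(∏_{j ≠ i} zⱼ)` of
`zᵢ'` contributes `aᵢ |∏_{j ≠ i} zⱼ|²`, while the phase terms `(1/2) zᵢ (…)` contribute
`(1/2) z₁z₂z₃z₄` times the sum of the four brackets, in which every `|zⱼ|²` has coefficient zero.
So the derivative is real, and the imaginary part has zero derivative.
-/

theorem HasDerivAt.mul₄ {𝕜 𝔸 : Type*} [NontriviallyNormedField 𝕜] [NormedRing 𝔸]
    [NormedAlgebra 𝕜 𝔸] {f₁ f₂ f₃ f₄ : 𝕜 → 𝔸} {f₁' f₂' f₃' f₄' : 𝔸} {x : 𝕜}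
    (h₁ : HasDerivAt f₁ f₁' x) (h₂ : HasDerivAt f₂ f₂' x) (h₃ : HasDerivAt f₃ f₃' x)
    (h₄ : HasDerivAt f₄ f₄' x) :
    HasDerivAt (fun s => f₁ s * f₂ s * f₃ s * f₄ s)
      (f₁' * f₂ x * f₃ x * f₄ x + f₁ x * f₂' * f₃ x * f₄ x
        + f₁ x * f₂ x * f₃' * f₄ x + f₁ x * f₂ x * f₃ x * f₄') x := by
  have h := ((h₁.mul h₂).mul h₃).mul h₄
  simp only [Pi.mul_apply, add_mul] at h
  exact h

theorem Complex.im_eq_of_forall_hasDerivAt_ofReal {f : ℝ → ℂ} {g : ℝ → ℝ}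
    (hf : ∀ t, HasDerivAt f (g t) t) (x y : ℝ) : (f x).im = (f y).im := by
  have him : ∀ t, HasDerivAt (fun s => (f s).im) 0 t := fun t => by
    simpa only [Function.comp_def, imCLM_apply, ofReal_im] using
      imCLM.hasFDerivAt.comp_hasDerivAt t (hf t)
  exact is_const_of_deriv_eq_zero (fun t => (him t).differentiableAt) (fun t => (him t).deriv) x y

theorem stmt19_general
    (a₁ a₂ a₃ a₄ : ℤ)
    (z₁ z₂ z₃ z₄ : ℝ → ℂ)
    (h1 : ∀ t, HasDerivAt z₁
      ((a₁ : ℂ) * conj (z₂ t * z₃ t * z₄ t)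
        + (1 / 2 : ℂ) * z₁ t * ((((a₄ - a₃ : ℤ) : ℝ) * ‖z₂ t‖ ^ 2
          + ((a₂ - a₄ : ℤ) : ℝ) * ‖z₃ t‖ ^ 2
          + ((a₃ - a₂ : ℤ) : ℝ) * ‖z₄ t‖ ^ 2 : ℝ) : ℂ)) t)
    (h2 : ∀ t, HasDerivAt z₂
      ((a₂ : ℂ) * conj (z₃ t * z₄ t * z₁ t)
        + (1 / 2 : ℂ) * z₂ t * ((((a₄ - a₁ : ℤ) : ℝ) * ‖z₃ t‖ ^ 2
          + ((a₁ - a₃ : ℤ) : ℝ) * ‖z₄ t‖ ^ 2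
          + ((a₃ - a₄ : ℤ) : ℝ) * ‖z₁ t‖ ^ 2 : ℝ) : ℂ)) t)
    (h3 : ∀ t, HasDerivAt z₃
      ((a₃ : ℂ) * conj (z₄ t * z₁ t * z₂ t)
        + (1 / 2 : ℂ) * z₃ t * ((((a₂ - a₁ : ℤ) : ℝ) * ‖z₄ t‖ ^ 2
          + ((a₄ - a₂ : ℤ) : ℝ) * ‖z₁ t‖ ^ 2
          + ((a₁ - a₄ : ℤ) : ℝ) * ‖z₂ t‖ ^ 2 : ℝ) : ℂ)) t)
    (h4 : ∀ t, HasDerivAt z₄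
      ((a₄ : ℂ) * conj (z₁ t * z₂ t * z₃ t)
        + (1 / 2 : ℂ) * z₄ t * ((((a₂ - a₃ : ℤ) : ℝ) * ‖z₁ t‖ ^ 2
          + ((a₃ - a₁ : ℤ) : ℝ) * ‖z₂ t‖ ^ 2
          + ((a₁ - a₂ : ℤ) : ℝ) * ‖z₃ t‖ ^ 2 : ℝ) : ℂ)) t) :
    (∀ t, HasDerivAt (fun s => z₁ s * z₂ s * z₃ s * z₄ s)
      ((((a₁ : ℝ) * ‖z₂ t * z₃ t * z₄ t‖ ^ 2
        + (a₂ : ℝ) * ‖z₃ t * z₄ t * z₁ t‖ ^ 2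
        + (a₃ : ℝ) * ‖z₄ t * z₁ t * z₂ t‖ ^ 2
        + (a₄ : ℝ) * ‖z₁ t * z₂ t * z₃ t‖ ^ 2 : ℝ) : ℂ)) t)
    ∧ (∀ t, (z₁ t * z₂ t * z₃ t * z₄ t).im = (z₁ 0 * z₂ 0 * z₃ 0 * z₄ 0).im) := by
  refine (fun hP => ⟨hP, fun t => im_eq_of_forall_hasDerivAt_ofReal hP t 0⟩) fun t => ?_
  refine ((h1 t).mul₄ (h2 t) (h3 t) (h4 t)).congr_deriv ?_
  push_cast
  -- with `‖w‖ ^ 2 = w * conj w` the claim becomes a polynomial identity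
  simp only [norm_mul, ofReal_mul, mul_pow, ← mul_conj', map_mul]
  ring

theorem stmt19
    (a₁ a₂ a₃ a₄ : ℤ) (ha : a₁ + a₂ + a₃ + a₄ = 0)
    (z₁ z₂ z₃ z₄ : ℝ → ℂ)
    (h1 : ∀ t, HasDerivAt z₁
      ((a₁ : ℂ) * conj (z₂ t * z₃ t * z₄ t)
        + (1 / 2 : ℂ) * z₁ t * ((((a₄ - a₃ : ℤ) : ℝ) * ‖z₂ t‖ ^ 2
          + ((a₂ - a₄ : ℤ) : ℝ) * ‖z₃ t‖ ^ 2
          + ((a₃ - a₂ : ℤ) : ℝ) * ‖z₄ t‖ ^ 2 : ℝ) : ℂ)) t)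
    (h2 : ∀ t, HasDerivAt z₂
      ((a₂ : ℂ) * conj (z₃ t * z₄ t * z₁ t)
        + (1 / 2 : ℂ) * z₂ t * ((((a₄ - a₁ : ℤ) : ℝ) * ‖z₃ t‖ ^ 2
          + ((a₁ - a₃ : ℤ) : ℝ) * ‖z₄ t‖ ^ 2
          + ((a₃ - a₄ : ℤ) : ℝ) * ‖z₁ t‖ ^ 2 : ℝ) : ℂ)) t)
    (h3 : ∀ t, HasDerivAt z₃
      ((a₃ : ℂ) * conj (z₄ t * z₁ t * z₂ t)
        + (1 / 2 : ℂ) * z₃ t * ((((a₂ - a₁ : ℤ) : ℝ) * ‖z₄ t‖ ^ 2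
          + ((a₄ - a₂ : ℤ) : ℝ) * ‖z₁ t‖ ^ 2
          + ((a₁ - a₄ : ℤ) : ℝ) * ‖z₂ t‖ ^ 2 : ℝ) : ℂ)) t)
    (h4 : ∀ t, HasDerivAt z₄
      ((a₄ : ℂ) * conj (z₁ t * z₂ t * z₃ t)
        + (1 / 2 : ℂ) * z₄ t * ((((a₂ - a₃ : ℤ) : ℝ) * ‖z₁ t‖ ^ 2
          + ((a₃ - a₁ : ℤ) : ℝ) * ‖z₂ t‖ ^ 2
          + ((a₁ - a₂ : ℤ) : ℝ) * ‖z₃ t‖ ^ 2 : ℝ) : ℂ)) t) :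
    (∀ t, HasDerivAt (fun s => z₁ s * z₂ s * z₃ s * z₄ s)
      ((((a₁ : ℝ) * ‖z₂ t * z₃ t * z₄ t‖ ^ 2
        + (a₂ : ℝ) * ‖z₃ t * z₄ t * z₁ t‖ ^ 2
        + (a₃ : ℝ) * ‖z₄ t * z₁ t * z₂ t‖ ^ 2
        + (a₄ : ℝ) * ‖z₁ t * z₂ t * z₃ t‖ ^ 2 : ℝ) : ℂ)) t)
    ∧ (∀ t, (z₁ t * z₂ t * z₃ t * z₄ t).im = (z₁ 0 * z₂ 0 * z₃ 0 * z₄ 0).im) :=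
  stmt19_general a₁ a₂ a₃ a₄ z₁ z₂ z₃ z₄ h1 h2 h3 h4
end
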